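/- arXiv:1802.07528 — 4 statements merged into one kernel-verified Lean document; each statement's English description precedes it below -/
import Mathlib

section
/- If Z ~ χ²_k (chi-squared with k degrees of freedom), then for all 0 < t < 1, P(|Z/k − 1| ≥ t) ≤ 2 exp(−k t²/8). -/
open MeasureTheory ProbabilityTheory Real
open scoped NNReal

/-! The square of a centred Gaussian of variance `v` has moment generating function
`λ ↦ (1 - 2vλ)^(-1/2)`, so by independence `Z` has moment generating function `(1 - 2λ)^(-k/2)`,
which is at most `exp (k (λ + 2λ²))` for `λ ≤ 1/4`. Chernoff's bound with `λ = t/4` for the upper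
tail and `λ = -t/4` for the lower tail then gives `exp (-k t² / 8)` for each. -/

lemma one_le_one_sub_mul_exp_add_sq {u : ℝ} (hu : u ≤ 1 / 2) : 1 ≤ (1 - u) * exp (u + u ^ 2) := by
  rcases le_total u 0 with hu₀ | hu₀
  · nlinarith [add_one_le_exp (u + u ^ 2)]
  · nlinarith [quadratic_le_exp_of_nonneg (by positivity : 0 ≤ u + u ^ 2)]

lemma inv_sqrt_one_sub_two_mul_le_exp {l : ℝ} (hl : l ≤ 1 / 4) :
    (√(1 - 2 * l))⁻¹ ≤ exp (l + 2 * l ^ 2) := by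
  have h : 0 < 1 - 2 * l := by linarith
  rw [inv_le_iff_one_le_mul₀ (sqrt_pos.2 h), ← sqrt_sq (exp_pos _).le, ← sqrt_mul (sq_nonneg _),
    one_le_sqrt, sq, ← exp_add, mul_comm]
  convert one_le_one_sub_mul_exp_add_sq (u := 2 * l) (by linarith) using 3
  ring

lemma mgf_sq_gaussianReal {v : ℝ≥0} {l : ℝ} (hl : 2 * v * l < 1) :
    mgf (fun x ↦ x ^ 2) (gaussianReal 0 v) l = (√(1 - 2 * v * l))⁻¹ := by
  rcases eq_or_ne v 0 with rfl | hv
  · simp [mgf]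
  have hv' : (0 : ℝ) < v := by positivity
  have hpdf : ∀ x, gaussianPDFReal 0 v x • exp (l * x ^ 2)
      = (√(2 * π * v))⁻¹ * exp (-((1 - 2 * v * l) / (2 * v)) * x ^ 2) := by
    intro x
    rw [gaussianPDFReal, smul_eq_mul, mul_assoc, ← exp_add]
    congr 2
    field_simp
    ring
  rw [mgf, integral_gaussianReal_eq_integral_smul hv]
  simp_rw [hpdf]
  rw [integral_const_mul, integral_gaussian, ← sqrt_inv, ← sqrt_inv, ← sqrt_mul (by positivity)]
  congr 1
  field_simp

lemma mgf_sum_sq_of_map_eq_gaussianReal {ι Ω : Type*} [Fintype ι] [MeasurableSpace Ω]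
    {P : Measure Ω} {g : ι → Ω → ℝ} {v : ℝ≥0} (hmeas : ∀ i, AEMeasurable (g i) P)
    (hindep : iIndepFun g P) (hlaw : ∀ i, P.map (g i) = gaussianReal 0 v) {l : ℝ}
    (hl : 2 * v * l < 1) :
    mgf (fun ω ↦ ∑ i, g i ω ^ 2) P l = (√(1 - 2 * v * l))⁻¹ ^ Fintype.card ι := by
  have hsq : ∀ i, mgf (fun ω ↦ g i ω ^ 2) P l = (√(1 - 2 * v * l))⁻¹ := fun i ↦ by
    rw [← mgf_sq_gaussianReal hl, ← hlaw i, mgf_map (hmeas i) (by fun_prop)]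
    rfl
  have hindep_sq : iIndepFun (fun i ω ↦ g i ω ^ 2) P :=
    hindep.comp (fun _ x ↦ x ^ 2) fun _ ↦ measurable_id.pow_const 2
  rw [← Finset.sum_fn, hindep_sq.mgf_sum₀ (fun i ↦ (hmeas i).pow_const 2), Finset.prod_congr rfl
    fun i _ ↦ hsq i, Finset.prod_const, Finset.card_univ]

lemma measureReal_le_abs_sub_le_of_mgf_le {Ω : Type*} [MeasurableSpace Ω] {μ : Measure Ω}
    [IsFiniteMeasure μ] {X : Ω → ℝ} {m ε l c : ℝ} (hl : 0 ≤ l)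
    (hint : Integrable (fun ω ↦ exp (l * X ω)) μ) (hint' : Integrable (fun ω ↦ exp (-l * X ω)) μ)
    (hmgf : mgf X μ l ≤ exp (l * m + c)) (hmgf' : mgf X μ (-l) ≤ exp (-l * m + c)) :
    μ.real {ω | ε ≤ |X ω - m|} ≤ 2 * exp (c - l * ε) := by
  have hupper : μ.real {ω | m + ε ≤ X ω} ≤ exp (c - l * ε) := calc
    _ ≤ exp (-l * (m + ε)) * mgf X μ l := measure_ge_le_exp_mul_mgf _ hl hint
    _ ≤ exp (-l * (m + ε)) * exp (l * m + c) := by gcongr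
    _ = exp (c - l * ε) := by rw [← exp_add]; ring_nf
  have hlower : μ.real {ω | X ω ≤ m - ε} ≤ exp (c - l * ε) := calc
    _ ≤ exp (- -l * (m - ε)) * mgf X μ (-l) :=
      measure_le_le_exp_mul_mgf _ (neg_nonpos.2 hl) hint'
    _ ≤ exp (- -l * (m - ε)) * exp (-l * m + c) := by gcongr
    _ = exp (c - l * ε) := by rw [← exp_add]; ring_nf
  have hsub : {ω | ε ≤ |X ω - m|} ⊆ {ω | m + ε ≤ X ω} ∪ {ω | X ω ≤ m - ε} := by
    intro ω (hω : ε ≤ |X ω - m|)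
    rcases le_abs'.1 hω with h | h
    exacts [Or.inr (show X ω ≤ m - ε by linarith), Or.inl (show m + ε ≤ X ω by linarith)]
  calc μ.real {ω | ε ≤ |X ω - m|}
      ≤ μ.real ({ω | m + ε ≤ X ω} ∪ {ω | X ω ≤ m - ε}) := measureReal_mono hsub
    _ ≤ μ.real {ω | m + ε ≤ X ω} + μ.real {ω | X ω ≤ m - ε} := measureReal_union_le _ _
    _ ≤ 2 * exp (c - l * ε) := by linarith

/-- chi-squared concentration. If `Z = Σᵢ gᵢ²` for `k` i.i.d. standard
Gaussians `gᵢ`, then for all `0 < t < 1`,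
`P(|Z/k - 1| ≥ t) ≤ 2 exp(-k t² / 8)`. -/
theorem chi_squared_tail_bound
    {Ω : Type*} [MeasurableSpace Ω] (P : Measure Ω) [IsProbabilityMeasure P]
    (k : ℕ) (hk : 0 < k) (g : Fin k → Ω → ℝ)
    (hmeas : ∀ i, Measurable (g i))
    (hindep : iIndepFun g P)
    (hlaw : ∀ i, Measure.map (g i) P = gaussianReal 0 1)
    (Z : Ω → ℝ) (hZ : ∀ ω, Z ω = ∑ i, (g i ω) ^ 2)
    (t : ℝ) (ht0 : 0 < t) (ht1 : t < 1) :
    P {ω | t ≤ |Z ω / k - 1|} ≤ ENNReal.ofReal (2 * Real.exp (-((k : ℝ) * t ^ 2) / 8)) := by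
  have hmgf : ∀ l : ℝ, l < 1 / 2 → mgf Z P l = (√(1 - 2 * l))⁻¹ ^ k := fun l hl ↦ by
    simpa [← funext hZ] using mgf_sum_sq_of_map_eq_gaussianReal (fun i ↦ (hmeas i).aemeasurable)
      hindep hlaw (l := l) (by push_cast; linarith)
  have hint : ∀ l : ℝ, l < 1 / 2 → Integrable (fun ω ↦ exp (l * Z ω)) P := fun l hl ↦
    mgf_pos_iff.1 (by rw [hmgf l hl]; exact pow_pos (inv_pos.2 (sqrt_pos.2 (by linarith))) _)
  have hbound : ∀ l : ℝ, l ≤ 1 / 4 → mgf Z P l ≤ exp (k * (l + 2 * l ^ 2)) := fun l hl ↦ by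
    rw [hmgf l (by linarith), exp_nat_mul]
    gcongr
    exact inv_sqrt_one_sub_two_mul_le_exp hl
  have hk' : (0 : ℝ) < k := by exact_mod_cast hk
  have hset : {ω | t ≤ |Z ω / k - 1|} = {ω | k * t ≤ |Z ω - k|} := by
    ext ω
    rw [Set.mem_ofPred_eq, Set.mem_ofPred_eq, div_sub_one hk'.ne', abs_div, abs_of_pos hk',
      le_div_iff₀' hk']
  rw [hset, ← ofReal_measureReal]
  gcongr
  convert measureReal_le_abs_sub_le_of_mgf_le (μ := P) (l := t / 4) (c := k * t ^ 2 / 8)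
    (by positivity) (hint _ (by linarith)) (hint _ (by linarith))
    ((hbound _ (by linarith)).trans_eq (by ring_nf)) ((hbound _ (by linarith)).trans_eq (by ring_nf))
    using 3
  ring
end

section
/- (Rao's identity) Let Σ ∈ ℝ^{p×p} be symmetric positive definite, A ∈ ℝ^{p×n} of rank n, and B ∈ ℝ^{p×(p−n)} of rank p−n with AᵀB = 0. Then Σ = B(BᵀΣ⁻¹B)⁻¹Bᵀ + ΣA(AᵀΣA)⁻¹AᵀΣ. -/
/-!
Write `R` for the right-hand side and `D = Σ - R`. A direct computation gives `AᵀD = 0` and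
`BᵀΣ⁻¹D = 0`. Since `AᵀB = 0` and the ranks of `A` and `B` add up to `p`, the kernel of `Aᵀ` is
exactly the column space of `B`, so every column `d` of `D` equals `Bz` for some `z`; then
`(BᵀΣ⁻¹B)z = BᵀΣ⁻¹d = 0`, and `BᵀΣ⁻¹B` is positive definite, so `z = 0`. Hence `D = 0`.
-/

open Matrix

namespace Matrix

section Algebra

variable {R : Type*} [CommRing R] {m n k : Type*} [Fintype m] [DecidableEq m]
  [Fintype n] [DecidableEq n] [Fintype k] [DecidableEq k]

noncomputable def raoRHS (S : Matrix m m R) (A : Matrix m n R) (B : Matrix m k R) :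
    Matrix m m R :=
  B * (Bᵀ * S⁻¹ * B)⁻¹ * Bᵀ + S * A * (Aᵀ * S * A)⁻¹ * Aᵀ * S

theorem transpose_mul_raoRHS {S : Matrix m m R} {A : Matrix m n R} {B : Matrix m k R}
    (hAB : Aᵀ * B = 0) (hA : IsUnit (Aᵀ * S * A).det) :
    Aᵀ * raoRHS S A B = Aᵀ * S := by
  simp only [raoRHS, Matrix.mul_add, ← Matrix.mul_assoc, hAB, Matrix.zero_mul, zero_add,
    mul_nonsing_inv _ hA, Matrix.one_mul]

theorem transpose_mul_inv_mul_raoRHS {S : Matrix m m R} {A : Matrix m n R} {B : Matrix m k R}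
    (hAB : Aᵀ * B = 0) (hS : IsUnit S.det) (hB : IsUnit (Bᵀ * S⁻¹ * B).det) :
    Bᵀ * S⁻¹ * raoRHS S A B = Bᵀ := by
  have hBA : Bᵀ * A = 0 := by rw [← transpose_transpose A, ← transpose_mul, hAB, transpose_zero]
  have hBS : Bᵀ * S⁻¹ * S = Bᵀ := by rw [Matrix.mul_assoc, nonsing_inv_mul _ hS, Matrix.mul_one]
  simp only [raoRHS, Matrix.mul_add, ← Matrix.mul_assoc, mul_nonsing_inv _ hB, Matrix.one_mul,
    hBS, hBA, Matrix.zero_mul, add_zero]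

end Algebra

section Field

variable {K : Type*} [Field K] {m n k l : Type*}

theorem mulVec_injective_of_rank_eq_card [Fintype n] {M : Matrix m n K}
    (h : M.rank = Fintype.card n) : Function.Injective M.mulVec := by
  rw [mulVec_injective_iff, linearIndependent_iff_card_eq_finrank_span, Set.finrank,
    ← rank_eq_finrank_span_cols, h]

theorem ker_mulVecLin_transpose_eq_range [Fintype m] [Fintype n] [Fintype k]
    {A : Matrix m n K} {B : Matrix m k K}
    (hAB : Aᵀ * B = 0) (hrank : A.rank + B.rank = Fintype.card m) :
    LinearMap.ker Aᵀ.mulVecLin = LinearMap.range B.mulVecLin := by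
  have hle : LinearMap.range B.mulVecLin ≤ LinearMap.ker Aᵀ.mulVecLin := by
    rw [LinearMap.range_le_ker_iff, ← mulVecLin_mul, hAB, mulVecLin_zero]
  have hnullity := LinearMap.finrank_range_add_finrank_ker Aᵀ.mulVecLin
  rw [← rank, rank_transpose, Module.finrank_fintype_fun_eq_card] at hnullity
  refine (Submodule.eq_of_le_of_finrank_eq hle ?_).symm
  rw [← rank]
  omega

theorem eq_zero_of_transpose_mul_eq_zero [Fintype m] [Fintype k] [Fintype l]
    {A : Matrix m n K} {B : Matrix m k K} {S : Matrix m m K} {D : Matrix m l K}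
    (hker : LinearMap.ker Aᵀ.mulVecLin = LinearMap.range B.mulVecLin)
    (hBSB : Function.Injective (Bᵀ * S * B).mulVec)
    (hAD : Aᵀ * D = 0) (hBD : Bᵀ * S * D = 0) : D = 0 := by
  classical
  refine ext_of_mulVec_single fun j => ?_
  obtain ⟨z, hz⟩ : D *ᵥ Pi.single j 1 ∈ LinearMap.range B.mulVecLin := by
    rw [← hker, LinearMap.mem_ker, mulVecLin_apply, mulVec_mulVec, hAD, zero_mulVec]
  rw [mulVecLin_apply] at hz
  have hz0 : z = 0 := hBSB <| by
    rw [mulVec_zero, ← mulVec_mulVec, hz, mulVec_mulVec, hBD, zero_mulVec]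
  rw [← hz, hz0, mulVec_zero, zero_mulVec]

end Field

end Matrix

/-- Rao's identity: for symmetric positive definite `Σ`, `A` of full column
rank `n`, `B` of full column rank `p - n` with `AᵀB = 0`,
`Σ = B(BᵀΣ⁻¹B)⁻¹Bᵀ + ΣA(AᵀΣA)⁻¹AᵀΣ`. -/
theorem rao_identity
    (p n : ℕ) (hn : n ≤ p)
    (Sig : Matrix (Fin p) (Fin p) ℝ) (hSig : Sig.PosDef)
    (A : Matrix (Fin p) (Fin n) ℝ) (hA : A.rank = n)
    (B : Matrix (Fin p) (Fin (p - n)) ℝ) (hB : B.rank = p - n)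
    (hAB : Aᵀ * B = 0) :
    Sig = B * (Bᵀ * Sig⁻¹ * B)⁻¹ * Bᵀ + Sig * A * (Aᵀ * Sig * A)⁻¹ * Aᵀ * Sig := by
  have hSig_det : IsUnit Sig.det := (isUnit_iff_isUnit_det _).1 hSig.isUnit
  have hA_inj := mulVec_injective_of_rank_eq_card (hA.trans (Fintype.card_fin n).symm)
  have hB_inj := mulVec_injective_of_rank_eq_card (hB.trans (Fintype.card_fin _).symm)
  have hASA : (Aᵀ * Sig * A).PosDef := hSig.conjTranspose_mul_mul_same hA_inj
  have hBSB : (Bᵀ * Sig⁻¹ * B).PosDef := hSig.inv.conjTranspose_mul_mul_same hB_inj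
  have hker : LinearMap.ker Aᵀ.mulVecLin = LinearMap.range B.mulVecLin :=
    ker_mulVecLin_transpose_eq_range hAB (by rw [hA, hB, Fintype.card_fin]; omega)
  change Sig = raoRHS Sig A B
  rw [← sub_eq_zero]
  refine eq_zero_of_transpose_mul_eq_zero hker (mulVec_injective_iff_isUnit.2 hBSB.isUnit) ?_ ?_
  · rw [Matrix.mul_sub, transpose_mul_raoRHS hAB ((isUnit_iff_isUnit_det _).1 hASA.isUnit),
      sub_self]
  · rw [Matrix.mul_sub, transpose_mul_inv_mul_raoRHS hAB
      hSig_det ((isUnit_iff_isUnit_det _).1 hBSB.isUnit), Matrix.mul_assoc,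
      nonsing_inv_mul _ hSig_det, Matrix.mul_one, sub_self]
end

section
/- Under the same setup ([S S⊥] orthogonal, Σ symmetric positive definite), det(S⊥ᵀΣS⊥) = det(Σ)·det(SᵀΣ⁻¹S). -/
/-!
Put `Q = [S⊥ S]` and `N = [Σ S⊥  S]`. Orthonormality of the columns of `Q` makes both `Qᵀ N` and
`Qᵀ Σ⁻¹ N` block triangular, with determinants `det(S⊥ᵀ Σ S⊥)` and `det(Sᵀ Σ⁻¹ S)` respectively.
Since `det(Qᵀ Σ⁻¹ N) = det Σ⁻¹ · det(Qᵀ N)`, the identity follows.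
-/

open Matrix

namespace Matrix

variable {R n k l : Type*} [CommRing R] [Fintype n]
  [Fintype k] [DecidableEq k] [Fintype l] [DecidableEq l]

theorem det_mul_of_equiv (e : k ⊕ l ≃ n) (X : Matrix (k ⊕ l) n R) (Y : Matrix n (k ⊕ l) R) :
    (X * Y).det = (X.submatrix id e).det * (Y.submatrix e id).det := by
  rw [← det_mul, submatrix_mul_equiv, submatrix_id_id]

theorem det_transpose_mul_mul_eq_det_mul_det_transpose_mul_inv_mul [DecidableEq n]
    (e : k ⊕ l ≃ n) (M : Matrix n n R) (hM : IsUnit M.det) (A : Matrix n k R) (B : Matrix n l R)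
    (hA : Aᵀ * A = 1) (hB : Bᵀ * B = 1) (hBA : Bᵀ * A = 0) :
    (Aᵀ * M * A).det = M.det * (Bᵀ * M⁻¹ * B).det := by
  have hAB : Aᵀ * B = 0 := by simpa using congrArg transpose hBA
  set Q := fromCols A B
  set N := fromCols (M * A) B
  have hQN : Qᵀ * N = fromBlocks (Aᵀ * M * A) 0 (Bᵀ * M * A) 1 := by
    rw [transpose_fromCols, fromRows_mul_fromCols, Matrix.mul_assoc, Matrix.mul_assoc, hAB, hB]
  have hQMN : Qᵀ * (M⁻¹ * N) = fromBlocks 1 (Aᵀ * M⁻¹ * B) 0 (Bᵀ * M⁻¹ * B) := by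
    rw [mul_fromCols, ← Matrix.mul_assoc, nonsing_inv_mul _ hM, Matrix.one_mul,
      transpose_fromCols, fromRows_mul_fromCols, hA, hBA, Matrix.mul_assoc, Matrix.mul_assoc]
  have hdetQN : (Aᵀ * M * A).det = (Qᵀ.submatrix id e).det * (N.submatrix e id).det := by
    rw [← det_mul_of_equiv, hQN, det_fromBlocks_zero₁₂, det_one, mul_one]
  have hdetQMN :
      (Bᵀ * M⁻¹ * B).det = (Qᵀ.submatrix id e).det * (M⁻¹.det * (N.submatrix e id).det) := by
    rw [← det_submatrix_equiv_self e M⁻¹, ← det_mul, submatrix_mul_equiv, ← det_mul_of_equiv, hQMN,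
      det_fromBlocks_zero₂₁, det_one, one_mul]
  rw [hdetQN, hdetQMN]
  linear_combination
    -((Qᵀ.submatrix id e).det * (N.submatrix e id).det) * det_nonsing_inv_mul_det _ hM

end Matrix

theorem det_orthogonal_complement_identity_general
    (p m : ℕ) (hm : m ≤ p)
    (Sig : Matrix (Fin p) (Fin p) ℝ) (hSig : Sig.PosDef)
    (S : Matrix (Fin p) (Fin m) ℝ) (Sperp : Matrix (Fin p) (Fin (p - m)) ℝ)
    (hS : Sᵀ * S = 1) (hSp : Sperpᵀ * Sperp = 1) (hortho : Sᵀ * Sperp = 0) :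
    (Sperpᵀ * Sig * Sperp).det = Sig.det * (Sᵀ * Sig⁻¹ * S).det :=
  det_transpose_mul_mul_eq_det_mul_det_transpose_mul_inv_mul
    (finSumFinEquiv.trans (finCongr (Nat.sub_add_cancel hm))) Sig
    ((isUnit_iff_isUnit_det Sig).mp hSig.isUnit) Sperp S hSp hS hortho

/-- for symmetric positive definite `Σ` and `[S S⊥]` orthogonal,
`det(S⊥ᵀΣS⊥) = det(Σ)·det(SᵀΣ⁻¹S)`. -/
theorem det_orthogonal_complement_identity
    (p m : ℕ) (hm : m ≤ p)
    (Sig : Matrix (Fin p) (Fin p) ℝ) (hSig : Sig.PosDef)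
    (S : Matrix (Fin p) (Fin m) ℝ) (Sperp : Matrix (Fin p) (Fin (p - m)) ℝ)
    (hS : Sᵀ * S = 1) (hSp : Sperpᵀ * Sperp = 1) (hortho : Sᵀ * Sperp = 0)
    (hcomplete : S * Sᵀ + Sperp * Sperpᵀ = 1) :
    (Sperpᵀ * Sig * Sperp).det = Sig.det * (Sᵀ * Sig⁻¹ * S).det :=
  det_orthogonal_complement_identity_general p m hm Sig hSig S Sperp hS hSp hortho
end

section
/- Let M, N ∈ ℝ^{n×n} be symmetric positive definite and m ≤ n. Among full-rank matrices S ∈ ℝ^{n×m}, the minimum of det(SᵀMS)/det(SᵀNS) is attained when the column space of S equals the span of the m leading eigenvectors of M⁻¹N, and the minimum value is the reciprocal of the product of the m largest eigenvalues of M^{-1/2} N M^{-1/2}. -/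
/-!
Write `A = R⁻¹ N R⁻¹ = Uᵀ D U` with `U` orthogonal (rows `vᵢ`) and `D = diag μ`. Putting
`W = U R S`, the quotient becomes `det (Wᵀ W) / det (Wᵀ D W)`. By Cauchy–Binet both determinants
are sums over the `m × m` row minors `W_g` (`g` strictly increasing) of `det W_g ^ 2`, weighted by
`1` and by `∏ⱼ μ (g j)` respectively. Since `g j ≥ j` and `μ` is decreasing, every weight is at
most `∏ⱼ<m μ j`, which gives the lower bound; for `S★` the matrix `W` consists of the first `m`
unit vectors and the bound is attained.
-/

open Matrix

section CauchyBinet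

variable {m n : ℕ}

open Classical in
theorem sum_injective_eq_sum_strictMono_sum_perm {α β : Type*} [LinearOrder α] [Fintype α]
    [AddCommMonoid β] (F : (Fin m → α) → β) :
    ∑ f with Function.Injective f, F f =
      ∑ g with StrictMono g, ∑ σ : Equiv.Perm (Fin m), F (g ∘ σ) := by
  rw [← Finset.sum_product']
  refine Finset.sum_nbij' (fun f => (f ∘ Tuple.sort f, (Tuple.sort f)⁻¹)) (fun p => p.1 ∘ p.2)
    ?_ ?_ ?_ ?_ ?_
  · intro f hf
    simp only [Finset.mem_filter, Finset.mem_univ, true_and] at hf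
    simpa using (Tuple.monotone_sort f).strictMono_of_injective
      (hf.comp (Tuple.sort f).injective)
  · rintro ⟨g, σ⟩ hg
    simp only [Finset.mem_product, Finset.mem_filter, Finset.mem_univ, true_and, and_true] at hg
    simpa using hg.injective.comp σ.injective
  · intro f _
    ext j
    simp
  · rintro ⟨g, σ⟩ hg
    simp only [Finset.mem_product, Finset.mem_filter, Finset.mem_univ, true_and, and_true] at hg
    have hsort : Tuple.sort (g ∘ σ) = σ⁻¹ := by
      refine ((Tuple.eq_sort_iff).2 ⟨?_, ?_⟩).symm
      · simpa [Function.comp_def] using hg.monotone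
      · intro i j hij hgij
        exact absurd (σ⁻¹.injective (σ.injective (hg.injective hgij))) hij.ne
    ext j <;> simp [hsort]
  · intro f _
    simp [Function.comp_def]

variable {R : Type*} [CommRing R]

theorem det_mul_eq_sum_prod_mul_det_submatrix (A : Matrix (Fin m) (Fin n) R)
    (B : Matrix (Fin n) (Fin m) R) :
    (A * B).det = ∑ f : Fin m → Fin n, (∏ j, A j (f j)) * (B.submatrix f id).det := by
  let D := (detRowAlternating : (Fin m → R) [⋀^Fin m]→ₗ[R] R).toMultilinearMap
  have hrows : (A * B).det = D (fun j => ∑ i, A j i • B i) := by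
    change _ = det _
    congr 1; ext j k; simp [mul_apply, Finset.sum_apply]
  rw [hrows, D.map_sum]
  refine Finset.sum_congr rfl fun f _ => ?_
  rw [D.map_smul_univ]
  rfl

-- The Cauchy–Binet formula.
open Classical in
theorem det_mul_eq_sum_strictMono (A : Matrix (Fin m) (Fin n) R) (B : Matrix (Fin n) (Fin m) R) :
    (A * B).det = ∑ g with StrictMono g, (A.submatrix id g).det * (B.submatrix g id).det := by
  rw [det_mul_eq_sum_prod_mul_det_submatrix, ← Finset.sum_filter_of_ne (p := Function.Injective)]
  · rw [sum_injective_eq_sum_strictMono_sum_perm]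
    refine Finset.sum_congr rfl fun g _ => ?_
    rw [← det_transpose, det_apply', Finset.sum_mul]
    refine Finset.sum_congr rfl fun σ _ => ?_
    rw [show B.submatrix (g ∘ σ) id = (B.submatrix g id).submatrix σ id from rfl, det_permute]
    simp only [transpose_apply, submatrix_apply, id, Function.comp_apply]
    ring
  · intro f _ hf
    by_contra hinj
    obtain ⟨i, j, hfij, hij⟩ : ∃ i j, f i = f j ∧ i ≠ j := by
      simpa [Function.Injective] using hinj
    exact hf (by rw [det_zero_of_row_eq hij (by ext k; simp [hfij]), mul_zero])

open Classical in
theorem det_transpose_mul_diagonal_mul (W : Matrix (Fin n) (Fin m) R) (d : Fin n → R) :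
    (Wᵀ * diagonal d * W).det =
      ∑ g with StrictMono g, (∏ j, d (g j)) * (W.submatrix g id).det ^ 2 := by
  rw [Matrix.mul_assoc, det_mul_eq_sum_strictMono]
  refine Finset.sum_congr rfl fun g _ => ?_
  have hdiag : (diagonal d * W).submatrix g id = diagonal (d ∘ g) * W.submatrix g id := by
    ext i j; simp [diagonal_mul]
  rw [← transpose_submatrix, det_transpose, hdiag, det_mul, det_diagonal]
  simp only [Function.comp_apply]
  ring

end CauchyBinet

theorem Fin.castLE_le_of_strictMono {m n : ℕ} (hmn : m ≤ n) {g : Fin m → Fin n} (hg : StrictMono g)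
    (j : Fin m) : Fin.castLE hmn j ≤ g j := by
  simpa [Fin.le_def] using Finset.card_le_card_of_injOn g (s := Finset.Iio j)
    (t := Finset.Iio (g j)) (fun i hi => by simpa using hg (by simpa using hi))
    hg.injective.injOn

theorem det_transpose_mul_diagonal_mul_le {R : Type*} [CommRing R] [LinearOrder R]
    [IsStrictOrderedRing R] {m n : ℕ} (hmn : m ≤ n) (W : Matrix (Fin n) (Fin m) R) {d : Fin n → R}
    (hd₀ : ∀ i, 0 ≤ d i) (hd : Antitone d) :
    (Wᵀ * diagonal d * W).det ≤ (∏ j : Fin m, d (Fin.castLE hmn j)) * (Wᵀ * W).det := by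
  classical
  have hWW : Wᵀ * W = Wᵀ * diagonal (fun _ : Fin n => (1 : R)) * W := by simp
  rw [hWW, det_transpose_mul_diagonal_mul, det_transpose_mul_diagonal_mul, Finset.mul_sum]
  refine Finset.sum_le_sum fun g hg => ?_
  simp only [Finset.prod_const_one, one_mul]
  refine mul_le_mul_of_nonneg_right ?_ (sq_nonneg _)
  exact Finset.prod_le_prod (fun j _ => hd₀ _)
    fun j _ => hd (Fin.castLE_le_of_strictMono hmn (Finset.mem_filter.1 hg).2 j)

theorem mulVec_injective_of_rank_eq {ι K : Type*} [Field K] {m : ℕ} {S : Matrix ι (Fin m) K}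
    (hS : S.rank = m) : Function.Injective S.mulVec := by
  rw [mulVec_injective_iff, linearIndependent_iff_card_eq_finrank_span, Set.finrank,
    ← rank_eq_finrank_span_cols, hS, Fintype.card_fin]

section Orthonormal

variable {ι κ α : Type*} [Fintype κ] [DecidableEq ι] [CommRing α]

theorem of_mul_transpose_of_orthonormal {v : ι → κ → α}
    (hv : ∀ i j, v i ⬝ᵥ v j = if i = j then 1 else 0) : of v * (of v)ᵀ = 1 := by
  ext i j
  rw [mul_apply', one_apply]
  exact hv i j

theorem of_mul_mul_transpose_of_eigenvectors [Fintype ι] {v : ι → κ → α}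
    (hv : of v * (of v)ᵀ = 1) {A : Matrix κ κ α} {μ : ι → α}
    (heig : ∀ i, A *ᵥ v i = μ i • v i) : of v * A * (of v)ᵀ = diagonal μ := by
  have hcols : A * (of v)ᵀ = (of v)ᵀ * diagonal μ := by
    ext k i
    rw [mul_diagonal]
    simp only [mul_apply, transpose_apply, of_apply]
    simpa [mulVec, dotProduct, mul_comm] using congrFun (heig i) k
  rw [Matrix.mul_assoc, hcols, ← Matrix.mul_assoc, hv, Matrix.one_mul]

end Orthonormal

section Whitening

variable {ι κ α : Type*} [Fintype ι] [CommRing α] {R : Matrix ι ι α}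

theorem transpose_mul_mul_self_mul (hR : Rᵀ = R) (S : Matrix ι κ α) :
    Sᵀ * (R * R) * S = (R * S)ᵀ * (R * S) := by
  rw [transpose_mul, hR]; simp only [Matrix.mul_assoc]

variable [DecidableEq ι]

theorem transpose_mul_mul_eq_conj (hR : Rᵀ = R) (hRu : IsUnit R.det)
    (N : Matrix ι ι α) (S : Matrix ι κ α) :
    Sᵀ * N * S = (R * S)ᵀ * (R⁻¹ * N * R⁻¹) * (R * S) := by
  rw [transpose_mul, hR]
  simp only [Matrix.mul_assoc]
  rw [nonsing_inv_mul_cancel_left _ _ hRu, mul_nonsing_inv_cancel_left _ _ hRu]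

theorem mulVec_inv_mulVec_eq_smul_of_conj {N : Matrix ι ι α} {x : ι → α} {c : α}
    (h : (R⁻¹ * N * R⁻¹) *ᵥ x = c • x) :
    ((R * R)⁻¹ * N) *ᵥ (R⁻¹ *ᵥ x) = c • (R⁻¹ *ᵥ x) := by
  rw [Matrix.mul_inv_rev, mulVec_mulVec,
    show R⁻¹ * R⁻¹ * N * R⁻¹ = R⁻¹ * (R⁻¹ * N * R⁻¹) by simp only [Matrix.mul_assoc],
    ← mulVec_mulVec, h, mulVec_smul]

end Whitening

section Diagonalization

variable {ι κ : Type*} [Fintype ι]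

theorem submatrix_transpose_mul_mul_submatrix {α : Type*} [CommRing α] (U X : Matrix ι ι α)
    (c : κ → ι) :
    (Uᵀ.submatrix id c)ᵀ * X * Uᵀ.submatrix id c = (U * X * Uᵀ).submatrix c c := by
  rw [submatrix_mul _ _ _ id _ Function.bijective_id,
    submatrix_mul _ _ _ id _ Function.bijective_id]
  rfl

variable [DecidableEq ι]

theorem Matrix.PosDef.pos_of_mul_mul_transpose_eq_diagonal {K : Type*} [Field K] [PartialOrder K]
    [StarRing K] [TrivialStar K] [StarOrderedRing K] {U A : Matrix ι ι K} {μ : ι → K}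
    (hA : A.PosDef) (hU : IsUnit U) (h : U * A * Uᵀ = diagonal μ) (i : ι) : 0 < μ i := by
  have hD := hA.mul_mul_conjTranspose_same (vecMul_injective_iff_isUnit.2 hU)
  rw [conjTranspose_eq_transpose_of_trivial, h, posDef_diagonal_iff] at hD
  exact hD i

theorem det_transpose_mul_mul_le_of_mul_mul_transpose_eq_diagonal {R : Type*} [CommRing R]
    [LinearOrder R] [IsStrictOrderedRing R] {m n : ℕ} (hmn : m ≤ n)
    {U A : Matrix (Fin n) (Fin n) R} {μ : Fin n → R} (hU : U * Uᵀ = 1)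
    (h : U * A * Uᵀ = diagonal μ) (hμ₀ : ∀ i, 0 ≤ μ i) (hμ : Antitone μ)
    (T : Matrix (Fin n) (Fin m) R) :
    (Tᵀ * A * T).det ≤ (∏ j : Fin m, μ (Fin.castLE hmn j)) * (Tᵀ * T).det := by
  have hUtU : Uᵀ * U = 1 := mul_eq_one_comm.1 hU
  have hA : A = Uᵀ * diagonal μ * U := by
    rw [← h, ← Matrix.mul_assoc, ← Matrix.mul_assoc, hUtU, Matrix.one_mul, Matrix.mul_assoc,
      hUtU, Matrix.mul_one]
  calc (Tᵀ * A * T).det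
      = ((U * T)ᵀ * diagonal μ * (U * T)).det := by
        simp only [hA, transpose_mul, Matrix.mul_assoc]
    _ ≤ (∏ j : Fin m, μ (Fin.castLE hmn j)) * ((U * T)ᵀ * (U * T)).det :=
        det_transpose_mul_diagonal_mul_le hmn _ hμ₀ hμ
    _ = (∏ j : Fin m, μ (Fin.castLE hmn j)) * (Tᵀ * T).det := by
        rw [transpose_mul, Matrix.mul_assoc, ← Matrix.mul_assoc Uᵀ, hUtU, Matrix.one_mul]

end Diagonalization

theorem det_quotient_minimizer_general
    (n m : ℕ) (hm : m ≤ n)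
    (M N : Matrix (Fin n) (Fin n) ℝ) (hN : N.PosDef)
    (R : Matrix (Fin n) (Fin n) ℝ) (hR : R.PosDef) (hRR : R * R = M)
    (μ : Fin n → ℝ) (v : Fin n → Fin n → ℝ)
    (hortho : ∀ i j, v i ⬝ᵥ v j = if i = j then 1 else 0)
    (heig : ∀ i, (R⁻¹ * N * R⁻¹) *ᵥ v i = μ i • v i)
    (hsorted : ∀ i j, i ≤ j → μ j ≤ μ i)
    (Sstar : Matrix (Fin n) (Fin m) ℝ)
    (hSstar : Sstar = R⁻¹ * Matrix.of (fun i (j : Fin m) => v (Fin.castLE hm j) i)) :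
    (∀ S : Matrix (Fin n) (Fin m) ℝ, S.rank = m →
      (∏ j : Fin m, μ (Fin.castLE hm j))⁻¹ ≤ (Sᵀ * M * S).det / (Sᵀ * N * S).det) ∧
    (Sstarᵀ * M * Sstar).det / (Sstarᵀ * N * Sstar).det =
      (∏ j : Fin m, μ (Fin.castLE hm j))⁻¹ ∧
    (∀ j : Fin m, (M⁻¹ * N) *ᵥ (R⁻¹ *ᵥ v (Fin.castLE hm j)) =
      μ (Fin.castLE hm j) • (R⁻¹ *ᵥ v (Fin.castLE hm j))) := by
  have hRt : Rᵀ = R := by simpa [conjTranspose_eq_transpose_of_trivial] using hR.isHermitian.eq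
  have hRu : IsUnit R.det := (isUnit_iff_isUnit_det R).1 hR.isUnit
  have hA : (R⁻¹ * N * R⁻¹).PosDef := by
    simpa only [hR.inv.isHermitian.eq] using
      hN.conjTranspose_mul_mul_same (mulVec_injective_of_isUnit hR.inv.isUnit)
  have hUUt : of v * (of v)ᵀ = 1 := of_mul_transpose_of_orthonormal hortho
  have hUAU := of_mul_mul_transpose_of_eigenvectors hUUt heig
  have hμ := hA.pos_of_mul_mul_transpose_eq_diagonal (IsUnit.of_mul_eq_one _ hUUt) hUAU
  subst hRR
  refine ⟨fun S hS => ?_, ?_, fun j => mulVec_inv_mulVec_eq_smul_of_conj (heig _)⟩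
  · have hNS : 0 < (Sᵀ * N * S).det := by
      simpa [conjTranspose_eq_transpose_of_trivial] using
        (hN.conjTranspose_mul_mul_same (mulVec_injective_of_rank_eq hS)).det_pos
    rw [le_div_iff₀ hNS, inv_mul_le_iff₀ (Finset.prod_pos fun j _ => hμ _),
      transpose_mul_mul_self_mul hRt, transpose_mul_mul_eq_conj hRt hRu N]
    exact det_transpose_mul_mul_le_of_mul_mul_transpose_eq_diagonal hm hUUt hUAU
      (fun i => (hμ i).le) hsorted _
  · have hRS : R * Sstar = (of v)ᵀ.submatrix id (Fin.castLE hm) := by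
      rw [hSstar, mul_nonsing_inv_cancel_left _ _ hRu]; rfl
    have hSM := submatrix_transpose_mul_mul_submatrix (of v) 1 (Fin.castLE hm)
    rw [Matrix.mul_one, Matrix.mul_one, hUUt, submatrix_one _ (Fin.castLE_injective hm)] at hSM
    rw [transpose_mul_mul_self_mul hRt, transpose_mul_mul_eq_conj hRt hRu N, hRS, hSM,
      submatrix_transpose_mul_mul_submatrix, hUAU, submatrix_diagonal _ _ (Fin.castLE_injective hm),
      det_one, det_diagonal, one_div]
    rfl

/-- for symmetric positive definite `M`, `N`, the minimum over full-rank
`S ∈ ℝ^{n×m}` of `det(SᵀMS)/det(SᵀNS)` equals the reciprocal of the product of the `m`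
largest eigenvalues `μ₁ ≥ ⋯ ≥ μₙ` of `M^{-1/2} N M^{-1/2}` (with orthonormal eigenvectors
`vᵢ`), and is attained at `S★ = M^{-1/2}[v₁ ⋯ v_m]`, whose columns `M^{-1/2}vⱼ` are
eigenvectors of `M⁻¹N` for the leading eigenvalues. -/
theorem det_quotient_minimizer
    (n m : ℕ) (hm : m ≤ n)
    (M N : Matrix (Fin n) (Fin n) ℝ) (hM : M.PosDef) (hN : N.PosDef)
    (R : Matrix (Fin n) (Fin n) ℝ) (hR : R.PosDef) (hRR : R * R = M)
    (μ : Fin n → ℝ) (v : Fin n → Fin n → ℝ)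
    (hortho : ∀ i j, v i ⬝ᵥ v j = if i = j then 1 else 0)
    (heig : ∀ i, (R⁻¹ * N * R⁻¹) *ᵥ v i = μ i • v i)
    (hsorted : ∀ i j, i ≤ j → μ j ≤ μ i)
    (Sstar : Matrix (Fin n) (Fin m) ℝ)
    (hSstar : Sstar = R⁻¹ * Matrix.of (fun i (j : Fin m) => v (Fin.castLE hm j) i)) :
    (∀ S : Matrix (Fin n) (Fin m) ℝ, S.rank = m →
      (∏ j : Fin m, μ (Fin.castLE hm j))⁻¹ ≤ (Sᵀ * M * S).det / (Sᵀ * N * S).det) ∧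
    (Sstarᵀ * M * Sstar).det / (Sstarᵀ * N * Sstar).det =
      (∏ j : Fin m, μ (Fin.castLE hm j))⁻¹ ∧
    (∀ j : Fin m, (M⁻¹ * N) *ᵥ (R⁻¹ *ᵥ v (Fin.castLE hm j)) =
      μ (Fin.castLE hm j) • (R⁻¹ *ᵥ v (Fin.castLE hm j))) :=
  det_quotient_minimizer_general n m hm M N hN R hR hRR μ v hortho heig hsorted Sstar hSstar
end
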